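/- For every rooted forest M, the subspace H_quot(M) of H* is finite-dimensional (its dimension is at most the number of admissible cuts of M) and is stable under the elimination operator E_A for every rooted forest A: E_A(H_quot(M)) ⊆ H_quot(M). Hence H_quot(M) is a finite-dimensional representation of n_T under the elimination action T·φ := −E_T φ. -/

import Mathlib

open scoped Classical

/-- Concrete (labeled) rooted trees: a root with a list of subtrees. -/
inductive RTree : Type
  | node : List RTree → RTree

/-- Shapes of admissible cuts: at each tree, either the full cut
(everything, including the root, goes to the pruned part `P`), or a choice of
an admissible cut of each child subtree.  A `full` occurring strictly inside
corresponds to cutting the edge above that vertex. -/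
inductive CutShape : Type
  | full
  | branch : List CutShape → CutShape

namespace CK

/-- Number of vertices of a forest. -/
def sizeL : List RTree → ℕ
  | [] => 0
  | .node l :: ts => 1 + sizeL l + sizeL ts

/-- All admissible cuts of a forest (a choice of admissible cut of each tree). -/
def cutsF : List RTree → List (List CutShape)
  | [] => [[]]
  | .node l :: ts =>
      (CutShape.full :: (cutsF l).map CutShape.branch).flatMap
        fun c => (cutsF ts).map (c :: ·)

/-- The root part `R_C(F)` of a cut. -/
def Rcut : List RTree → List CutShape → List RTree
  | [], _ => []
  | _ :: _, [] => []
  | .node _ :: ts, .full :: cs => Rcut ts cs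
  | .node l :: ts, .branch ds :: cs => RTree.node (Rcut l ds) :: Rcut ts cs

/-- The pruned part `P_C(F)` of a cut. -/
def Pcut : List RTree → List CutShape → List RTree
  | [], _ => []
  | _ :: _, [] => []
  | .node l :: ts, .full :: cs => RTree.node l :: Pcut ts cs
  | .node l :: ts, .branch ds :: cs => Pcut l ds ++ Pcut ts cs

/-- Number of `full`s occurring in a cut. -/
def fullsL : List CutShape → ℕ
  | [] => 0
  | .full :: cs => 1 + fullsL cs
  | .branch ds :: cs => fullsL ds + fullsL cs

/-- A list of concrete forests containing (representatives of) every forest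
with at most `n` vertices. -/
def forestsUpTo : ℕ → List (List RTree)
  | 0 => [[]]
  | n+1 => [] :: (forestsUpTo n).flatMap fun l => (forestsUpTo n).map fun F => RTree.node l :: F

/-- Isomorphism of rooted trees (non-planar): a root-preserving bijection, i.e.
the lists of subtrees agree up to permutation and isomorphism. -/
inductive Iso : RTree → RTree → Prop
  | node {l₁ l l₂ : List RTree} : List.Forall₂ Iso l₁ l → l.Perm l₂ → Iso (.node l₁) (.node l₂)

/-- Isomorphism classes of rooted trees. -/
abbrev TreeClass : Type := Quot Iso

/-- Isomorphism classes of rooted forests = multisets of tree classes.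
The empty forest is `0`. -/
abbrev ForestClass : Type := Multiset TreeClass

/-- Isomorphism class of a tree. -/
def clT (t : RTree) : TreeClass := Quot.mk _ t

/-- Isomorphism class of a forest. -/
def clF (F : List RTree) : ForestClass := (F.map clT : List TreeClass)

/-- A concrete representative of a forest class. -/
noncomputable def repF (M : ForestClass) : List RTree := M.toList.map Quot.out

/-- A concrete representative of a tree class. -/
noncomputable def repT (T : TreeClass) : RTree := T.out

/-- Number of vertices of a forest class. -/
noncomputable def sizeC (M : ForestClass) : ℕ := sizeL (repF M)

/-- Number of vertices of a tree class. -/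
noncomputable def sizeT (T : TreeClass) : ℕ := sizeL [repT T]

/-- The Hall algebra `H`: finitely supported ℚ-valued functions on
isomorphism classes of rooted forests, with basis the delta functions. -/
abbrev H : Type := ForestClass →₀ ℚ

/-- The basis element `δ_A` of `H`. -/
noncomputable def delta (A : ForestClass) : H := Finsupp.single A 1

/-- `n(A,B;M)`: the number of admissible cuts `C` of `M` with
`P_C(M) ≅ A` and `R_C(M) ≅ B`. -/
noncomputable def nCuts (A B M : ForestClass) : ℕ :=
  (cutsF (repF M)).countP fun c =>
    decide (clF (Pcut (repF M) c) = A ∧ clF (Rcut (repF M) c) = B)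

/-- A finite set of forest classes containing all classes with at most `n`
vertices. -/
noncomputable def forestCand (n : ℕ) : Finset ForestClass :=
  ((forestsUpTo n).map clF).toFinset

/-- A finite set of tree classes containing all classes with at most `n+1`
vertices. -/
noncomputable def treeCand (n : ℕ) : Finset TreeClass :=
  ((forestsUpTo n).map fun F => clT (RTree.node F)).toFinset

/-- The Hall product on basis elements: `δ_A × δ_B = Σ_M n(A,B;M)·δ_M`
(every `M` with `n(A,B;M) ≠ 0` has exactly `sizeC A + sizeC B` vertices). -/
noncomputable def mulBasis (A B : ForestClass) : H :=
  ∑ M ∈ forestCand (sizeC A + sizeC B), (nCuts A B M : ℚ) • delta M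

/-- The Hall product on `H`, extended bilinearly from basis elements. -/
noncomputable def hmul (f g : H) : H :=
  f.sum fun A a => g.sum fun B b => (a * b) • mulBasis A B

/-- The Connes-Kreimer Lie algebra `n_T` (as a vector space): the span of
isomorphism classes of rooted trees. -/
abbrev nT : Type := TreeClass →₀ ℚ

/-- The basis element of `n_T` corresponding to a rooted tree `T`. -/
noncomputable def tau (T : TreeClass) : nT := Finsupp.single T 1

/-- `a(T₁,T₂;T)`: the number of edges `e` of `T` such that the single-edge cut
at `e` has pruned part `≅ T₁` and root part `≅ T₂`. -/
noncomputable def aCount (T₁ T₂ T : TreeClass) : ℕ :=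
  (cutsF [repT T]).countP fun c =>
    decide (fullsL c = 1 ∧ clF (Pcut [repT T] c) = ({T₁} : Multiset TreeClass)
      ∧ clF (Rcut [repT T] c) = ({T₂} : Multiset TreeClass))

/-- The grafting (pre-Lie) product on basis elements:
`T₁ * T₂ = Σ_T a(T₁,T₂;T)·T`. -/
noncomputable def graftBasis (T₁ T₂ : TreeClass) : nT :=
  ∑ T ∈ treeCand (sizeT T₁ + sizeT T₂), (aCount T₁ T₂ T : ℚ) • tau T

/-- The grafting (pre-Lie) product on `n_T`, extended bilinearly. -/
noncomputable def graft (x y : nT) : nT :=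
  x.sum fun T₁ a => y.sum fun T₂ b => (a * b) • graftBasis T₁ T₂

/-- The Connes-Kreimer bracket `[x,y] = x*y - y*x` on `n_T`. -/
noncomputable def ckBracket (x y : nT) : nT := graft x y - graft y x

/-- `Ẽ_A δ_B = Σ_C δ_{R_C(B)}`, the sum over admissible cuts `C` of `B` with
`P_C(B) ≅ A`. -/
noncomputable def elimBasis (A B : ForestClass) : H :=
  (((cutsF (repF B)).filter fun c => decide (clF (Pcut (repF B) c) = A)).map
    fun c => delta (clF (Rcut (repF B) c))).sum

/-- The elimination operator `E_A` (here on `H ≅ H*`, identifying `φ_B` with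
`δ_B`). -/
noncomputable def elim (A : ForestClass) : H →ₗ[ℚ] H :=
  Finsupp.lsum ℚ fun B => LinearMap.toSpanSingleton ℚ H (elimBasis A B)

/-- `Ẽ^top_A δ_B = Σ_C δ_{P_C(B)}`, the sum over admissible cuts `C` of `B`
with `R_C(B) ≅ A`. -/
noncomputable def topElimBasis (A B : ForestClass) : H :=
  (((cutsF (repF B)).filter fun c => decide (clF (Rcut (repF B) c) = A)).map
    fun c => delta (clF (Pcut (repF B) c))).sum

/-- The top-elimination operator `E^top_A`. -/
noncomputable def topElim (A : ForestClass) : H →ₗ[ℚ] H :=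
  Finsupp.lsum ℚ fun B => LinearMap.toSpanSingleton ℚ H (topElimBasis A B)

/-- `H ⊗ H`, realized as finitely supported functions on pairs of classes. -/
abbrev H2 : Type := (ForestClass × ForestClass) →₀ ℚ

/-- `Δ(δ_M) = Σ δ_A ⊗ δ_B`, the sum over ordered pairs `(A,B)` of classes with
`A ⊔ B ≅ M`. -/
noncomputable def deltaBasis (M : ForestClass) : H2 :=
  ∑ A ∈ M.powerset.toFinset, Finsupp.single (A, M - A) 1

/-- The coproduct `Δ : H → H ⊗ H`. -/
noncomputable def coprod : H →ₗ[ℚ] H2 :=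
  Finsupp.lsum ℚ fun M => LinearMap.toSpanSingleton ℚ H2 (deltaBasis M)

/-- `H_quot(M)`: the subspace of `H* ≅ H` spanned by
`{φ_{R_C(M)} : C an admissible cut of M}` (the quotients of `M`). -/
noncomputable def Hquot (M : ForestClass) : Submodule ℚ H :=
  Submodule.span ℚ
    {v : H | ∃ c ∈ cutsF (repF M), v = delta (clF (Rcut (repF M) c))}

/-!
Let `quotientClasses F` be the finite set of classes of root parts `R_C(F)`. It is the
Minkowski sum of the corresponding sets of the trees of `F`, and for a single tree
`quotientClasses [B₊ l] = {0} ∪ B₊ (quotientClasses l)`. These two recursions show that it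
depends only on the isomorphism class of `F`, and that a root part of a root part of `F` is a
root part of `F`. Since `E_A φ_B` is a sum of `φ_R` over root parts `R` of `B`, `E_A` maps the
span of the `φ_R`, `R` a root part of `M`, into itself; that span has at most one generator per
cut of `M`.
-/

open List Pointwise

mutual
theorem Iso.refl : ∀ t : RTree, Iso t t
  | .node l => .node (forall₂_iso_refl l) (.refl l)
theorem forall₂_iso_refl : ∀ l : List RTree, Forall₂ Iso l l
  | [] => .nil
  | t :: l => .cons (Iso.refl t) (forall₂_iso_refl l)
end

mutual
theorem Iso.symm : ∀ {s t : RTree}, Iso s t → Iso t s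
  | _, _, .node h p =>
    let ⟨_, h', p'⟩ := perm_comp_forall₂ p.symm (forall₂_iso_symm h)
    .node h' p'
theorem forall₂_iso_symm : ∀ {l m : List RTree}, Forall₂ Iso l m → Forall₂ Iso m l
  | _, _, .nil => .nil
  | _, _, .cons h t => .cons (Iso.symm h) (forall₂_iso_symm t)
end

mutual
theorem Iso.trans : ∀ {r s t : RTree}, Iso r s → Iso s t → Iso r t
  | _, _, _, .node h₁ p₁, .node h₂ p₂ =>
    let ⟨_, h, p⟩ := perm_comp_forall₂ p₁ h₂
    .node (forall₂_iso_trans h₁ h) (p.trans p₂)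
theorem forall₂_iso_trans : ∀ {l m n : List RTree},
    Forall₂ Iso l m → Forall₂ Iso m n → Forall₂ Iso l n
  | _, _, _, .nil, .nil => .nil
  | _, _, _, .cons h t, .cons h' t' => .cons (Iso.trans h h') (forall₂_iso_trans t t')
end

theorem iso_equivalence : Equivalence Iso := ⟨Iso.refl, Iso.symm, Iso.trans⟩

theorem clT_eq_iff {s t : RTree} : clT s = clT t ↔ Iso s t :=
  Quot.eq.trans iso_equivalence.eqvGen_iff

theorem exists_forall₂_iso_perm_of_clF_eq {A B : List RTree} (h : clF A = clF B) :
    ∃ L, Forall₂ Iso A L ∧ L.Perm B := by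
  have hA : Forall₂ (fun a q => clT a = q) A (A.map clT) :=
    forall₂_map_right_iff.mpr (forall₂_same.mpr fun _ _ => rfl)
  have hAB : Relation.Comp (Forall₂ (fun a q => clT a = q)) Perm A (B.map clT) :=
    ⟨_, hA, Multiset.coe_eq_coe.mp h⟩
  rw [forall₂_comp_perm_eq_perm_comp_forall₂] at hAB
  obtain ⟨A', hAA', hA'B⟩ := hAB
  exact perm_comp_forall₂ hAA' ((forall₂_map_right_iff.mp hA'B).imp fun _ _ => clT_eq_iff.mp)

theorem clT_node_eq_of_clF_eq {A B : List RTree} (h : clF A = clF B) :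
    clT (.node A) = clT (.node B) :=
  let ⟨_, hL, p⟩ := exists_forall₂_iso_perm_of_clF_eq h
  Quot.sound (.node hL p)

theorem clF_repF (B : ForestClass) : clF (repF B) = B := by
  have : (clT ∘ Quot.out : TreeClass → TreeClass) = id := funext Quot.out_eq
  rw [clF, repF, List.map_map, this, List.map_id, Multiset.coe_toList]

theorem mem_cutsF_nil {c : List CutShape} : c ∈ cutsF [] ↔ c = [] := by
  simp [cutsF]

theorem mem_cutsF_cons {t : RTree} {F : List RTree} {c : List CutShape} :
    c ∈ cutsF (t :: F) ↔ ∃ d cs, [d] ∈ cutsF [t] ∧ cs ∈ cutsF F ∧ c = d :: cs := by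
  obtain ⟨l⟩ := t
  simp [cutsF, eq_comm]

theorem mem_cutsF_node {l : List RTree} {d : CutShape} :
    [d] ∈ cutsF [.node l] ↔ d = .full ∨ ∃ ds ∈ cutsF l, d = .branch ds := by
  simp [cutsF, eq_comm]

theorem mem_cutsF_singleton {l : List RTree} {c : List CutShape} :
    c ∈ cutsF [.node l] ↔ c = [.full] ∨ ∃ ds ∈ cutsF l, c = [.branch ds] := by
  simp [cutsF, eq_comm]

theorem clF_Rcut_cons (t : RTree) (F : List RTree) (d : CutShape) (c : List CutShape) :
    clF (Rcut (t :: F) (d :: c)) = clF (Rcut [t] [d]) + clF (Rcut F c) := by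
  obtain ⟨l⟩ := t
  cases d <;> simp [Rcut, clF]

noncomputable def quotientClasses (F : List RTree) : Finset ForestClass :=
  ((cutsF F).map fun c => clF (Rcut F c)).toFinset

theorem mem_quotientClasses {F : List RTree} {B : ForestClass} :
    B ∈ quotientClasses F ↔ ∃ c ∈ cutsF F, clF (Rcut F c) = B := by
  simp [quotientClasses]

theorem quotientClasses_cons (t : RTree) (F : List RTree) :
    quotientClasses (t :: F) = quotientClasses [t] + quotientClasses F := by
  ext B
  simp only [mem_quotientClasses, Finset.mem_add]
  constructor
  · rintro ⟨_, hc, rfl⟩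
    obtain ⟨d, cs, hd, hcs, rfl⟩ := mem_cutsF_cons.mp hc
    exact ⟨_, ⟨[d], hd, rfl⟩, _, ⟨cs, hcs, rfl⟩, (clF_Rcut_cons t F d cs).symm⟩
  · rintro ⟨_, ⟨c₁, hc₁, rfl⟩, _, ⟨cs, hcs, rfl⟩, rfl⟩
    obtain ⟨d, _, hd, hnil, rfl⟩ := mem_cutsF_cons.mp hc₁
    rw [mem_cutsF_nil.mp hnil]
    exact ⟨_, mem_cutsF_cons.mpr ⟨d, cs, hd, hcs, rfl⟩, clF_Rcut_cons t F d cs⟩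

noncomputable def bPlus (B : ForestClass) : ForestClass := {clT (.node (repF B))}

theorem bPlus_clF (F : List RTree) : bPlus (clF F) = clF [.node F] :=
  congrArg ({·}) (clT_node_eq_of_clF_eq (clF_repF _))

theorem quotientClasses_node (l : List RTree) :
    quotientClasses [.node l] = insert 0 ((quotientClasses l).image bPlus) := by
  ext B
  simp only [mem_quotientClasses, Finset.mem_insert, Finset.mem_image, mem_cutsF_singleton]
  constructor
  · rintro ⟨_, rfl | ⟨ds, hds, rfl⟩, rfl⟩
    · exact .inl (by simp [Rcut, clF])
    · exact .inr ⟨_, ⟨ds, hds, rfl⟩, by rw [bPlus_clF, Rcut, Rcut]⟩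
  · rintro (rfl | ⟨_, ⟨ds, hds, rfl⟩, rfl⟩)
    · exact ⟨_, .inl rfl, by simp [Rcut, clF]⟩
    · exact ⟨_, .inr ⟨ds, hds, rfl⟩, by rw [bPlus_clF, Rcut, Rcut]⟩

theorem zero_mem_quotientClasses_singleton (t : RTree) : 0 ∈ quotientClasses [t] := by
  obtain ⟨l⟩ := t
  simp [quotientClasses_node]

theorem quotientClasses_perm {F G : List RTree} (p : F.Perm G) :
    quotientClasses F = quotientClasses G := by
  induction p with
  | nil => rfl
  | @cons t F G _ ih => rw [quotientClasses_cons t F, quotientClasses_cons t G, ih]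
  | swap s t F =>
    rw [quotientClasses_cons t (s :: F), quotientClasses_cons s F, quotientClasses_cons s (t :: F),
      quotientClasses_cons t F, add_left_comm]
  | trans _ _ ih₁ ih₂ => exact ih₁.trans ih₂

mutual
theorem quotientClasses_eq_of_iso : ∀ {s t : RTree}, Iso s t →
    quotientClasses [s] = quotientClasses [t]
  | _, _, .node h p => by
    rw [quotientClasses_node, quotientClasses_node, quotientClasses_eq_of_forall₂ h,
      quotientClasses_perm p]
theorem quotientClasses_eq_of_forall₂ : ∀ {F G : List RTree}, Forall₂ Iso F G →
    quotientClasses F = quotientClasses G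
  | _, _, .nil => rfl
  | _ :: l₁, _ :: l₂, .cons h hs => by
    rw [quotientClasses_cons _ l₁, quotientClasses_cons _ l₂, quotientClasses_eq_of_iso h,
      quotientClasses_eq_of_forall₂ hs]
end

theorem quotientClasses_congr {F G : List RTree} (h : clF F = clF G) :
    quotientClasses F = quotientClasses G :=
  let ⟨_, hL, p⟩ := exists_forall₂_iso_perm_of_clF_eq h
  (quotientClasses_eq_of_forall₂ hL).trans (quotientClasses_perm p)

theorem quotientClasses_Rcut_subset : ∀ {F : List RTree} {c : List CutShape}, c ∈ cutsF F →
    quotientClasses (Rcut F c) ⊆ quotientClasses F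
  | [], _, hc => by rw [mem_cutsF_nil.mp hc, Rcut]
  | .node l :: F, _, hc => by
    obtain ⟨d, cs, hd, hcs, rfl⟩ := mem_cutsF_cons.mp hc
    rw [quotientClasses_cons _ F]
    rcases mem_cutsF_node.mp hd with rfl | ⟨ds, hds, rfl⟩
    · rw [Rcut]
      exact (quotientClasses_Rcut_subset hcs).trans
        (Finset.subset_add_right _ (zero_mem_quotientClasses_singleton _))
    · rw [Rcut, quotientClasses_cons _ (Rcut F cs), quotientClasses_node, quotientClasses_node]
      refine Finset.add_subset_add (Finset.insert_subset_insert _ ?_)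
        (quotientClasses_Rcut_subset hcs)
      exact Finset.image_subset_image (quotientClasses_Rcut_subset hds)

theorem card_quotientClasses_le (F : List RTree) :
    (quotientClasses F).card ≤ (cutsF F).length :=
  (List.toFinset_card_le _).trans (List.length_map _).le

theorem quotientClasses_repF_subset {F : List RTree} {B : ForestClass}
    (hB : B ∈ quotientClasses F) : quotientClasses (repF B) ⊆ quotientClasses F := by
  obtain ⟨c, hc, rfl⟩ := mem_quotientClasses.mp hB
  rw [quotientClasses_congr (clF_repF _)]
  exact quotientClasses_Rcut_subset hc

theorem Hquot_eq_span (M : ForestClass) :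
    Hquot M = Submodule.span ℚ ((quotientClasses (repF M)).image delta : Set H) := by
  rw [Hquot]
  congr 1
  ext v
  simp [mem_quotientClasses, eq_comm]

theorem elim_delta (A B : ForestClass) : elim A (delta B) = elimBasis A B := by
  rw [elim, delta, Finsupp.lsum_single, LinearMap.toSpanSingleton_apply_one]

theorem elimBasis_mem_span (A B : ForestClass) :
    elimBasis A B ∈ Submodule.span ℚ ((quotientClasses (repF B)).image delta : Set H) := by
  refine list_sum_mem fun v hv => ?_
  obtain ⟨c, hc, rfl⟩ := List.mem_map.mp hv
  exact Submodule.subset_span (Finset.mem_coe.mpr (Finset.mem_image_of_mem _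
    (mem_quotientClasses.mpr ⟨c, (List.mem_filter.mp hc).1, rfl⟩)))

theorem Hquot_le_comap_elim (A M : ForestClass) : Hquot M ≤ (Hquot M).comap (elim A) := by
  rw [Hquot_eq_span, Submodule.span_le]
  intro v hv
  obtain ⟨B, hB, rfl⟩ := Finset.mem_image.mp hv
  have hsub := Finset.image_subset_image (f := delta) (quotientClasses_repF_subset hB)
  rw [SetLike.mem_coe, Submodule.mem_comap, elim_delta]
  exact Submodule.span_mono (Finset.coe_subset.mpr hsub) (elimBasis_mem_span A B)

/-- STATEMENT 13: for every rooted forest `M`, the subspace `H_quot(M)` is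
finite-dimensional of dimension at most the number of admissible cuts of `M`,
and is stable under every elimination operator `E_A`.  Hence it is a
finite-dimensional representation of `n_T` under the elimination action. -/
theorem Hquot_findim_stable (M : ForestClass) :
    FiniteDimensional ℚ (Hquot M) ∧
    Module.finrank ℚ (Hquot M) ≤ (cutsF (repF M)).length ∧
    ∀ A : ForestClass, ∀ w ∈ Hquot M, elim A w ∈ Hquot M := by
  refine ⟨?_, ?_, fun A w hw => Hquot_le_comap_elim A M hw⟩ <;> rw [Hquot_eq_span]
  · exact FiniteDimensional.span_finset ℚ _
  · exact (finrank_span_finset_le_card _).trans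
      (Finset.card_image_le.trans (card_quotientClasses_le _))

end CK
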